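/- Let a, b, p, q be complex numbers with p ≠ 0, q ≠ 0 and p² − 4q ≠ 0, let r, t be integers with u_r ≠ 0 and v_r ≠ 0, write Δ² = p² − 4q, and let n be a non-negative integer. Then: (i) Σ_{j=0}^{2n} (−1)^j q^{rj} w_{2r(n−j)+t} = (w_t/2)·Σ_{j=0}^{n} (u_r²Δ²/4)^j v_{2r(n−j)} + (w_t/u_r)·Σ_{j=1}^{n} (u_r²Δ²/4)^j u_{r(2n−2j+1)} = w_t·v_{r(2n+1)}/v_r; and (ii) Σ_{j=0}^{2n−1} (−1)^j q^{rj} w_{r(2n−1−2j)+t} = ((w_{t+1} − q·w_{t−1})/2)·Σ_{j=0}^{n−1} (u_r²Δ²/4)^j u_{r(2n−2j−1)} + ((w_{t+1} − q·w_{t−1})/(u_rΔ²))·Σ_{j=1}^{n} (u_r²Δ²/4)^j v_{r(2n−2j)} = (w_{t+2rn} − q^{2rn} w_{t−2rn})/v_r. -/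

import Mathlib

open Finset

/-- Horadam sequence `w n (a,b;p,q)` for natural indices. -/
def horadamAux (a b p q : ℂ) : ℕ → ℂ
  | 0 => a
  | 1 => b
  | n + 2 => p * horadamAux a b p q (n + 1) - q * horadamAux a b p q n

/-- Horadam sequence at negative indices: `horadamNegAux a b p q n = w (-n)`,
defined via the backward recurrence `w (n-2) = (p * w (n-1) - w n) / q`. -/
noncomputable def horadamNegAux (a b p q : ℂ) : ℕ → ℂ
  | 0 => a
  | 1 => (p * a - b) / q
  | n + 2 => (p * horadamNegAux a b p q (n + 1) - horadamNegAux a b p q n) / q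

/-- Horadam sequence `w n (a,b;p,q)` for integer indices. -/
noncomputable def horadam (a b p q : ℂ) (n : ℤ) : ℂ :=
  if 0 ≤ n then horadamAux a b p q n.toNat else horadamNegAux a b p q n.natAbs

/-!
Let `α, β` be the roots of `X² - pX + q`; they are nonzero and, as `Δ² ≠ 0`, distinct, so
Binet's formula `w_m = A αᵐ + B βᵐ` holds for all integers `m`. Put `x = αʳ`, `y = βʳ`, so that
`qʳ = xy`, `v_r = x + y` and `u_r²Δ²/4 = (x - y)²/4`. The `j`-th term of an alternating sum with
`M` terms is `A αᵗ x^(M-1-j) (-y)ʲ + B βᵗ y^(M-1-j) (-x)ʲ`, and multiplying by `x + y`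
telescopes the sum to `A αᵗ (x^M - (-y)^M) + B βᵗ (y^M - (-x)^M)`. By the parity of `M` this is
`w_t v_{rM}` or `(w_{t+1} - q w_{t-1}) u_{rM}`, and the latter is `w_{t+rM} - q^{rM} w_{t-rM}`.
The expansions in powers of `C = u_r²Δ²/4` follow by induction on `n`: both sides satisfy
`S_{n+1} = C S_n + (two new terms)`, and for the closed forms this recurrence is a Lucas
identity checked by Binet's formula.
-/

section Horadam

variable {a b p q : ℂ}

lemma horadam_natCast (k : ℕ) : horadam a b p q k = horadamAux a b p q k := by
  simp [horadam]

lemma horadam_neg_natCast (k : ℕ) : horadam a b p q (-k) = horadamNegAux a b p q k := by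
  rcases k with _ | k
  · simp [horadam, horadamAux, horadamNegAux]
  · rw [horadam, if_neg (by omega), Int.natAbs_neg, Int.natAbs_natCast]

lemma horadam_zero : horadam a b p q 0 = a := horadam_natCast 0

lemma horadam_one : horadam a b p q 1 = b := horadam_natCast 1

lemma horadam_add_two (hq : q ≠ 0) (m : ℤ) :
    horadam a b p q (m + 2) = p * horadam a b p q (m + 1) - q * horadam a b p q m := by
  have hnat (k : ℕ) :
      horadam a b p q (k + 2) = p * horadam a b p q (k + 1) - q * horadam a b p q k := by
    exact_mod_cast horadam_natCast (k + 2)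
  obtain ⟨k, rfl | rfl⟩ := m.eq_nat_or_neg
  · exact hnat k
  · rcases k with _ | _ | k
    · simpa using hnat 0
    · rw [show -((1 : ℕ) : ℤ) + 2 = (1 : ℕ) by norm_num,
        show -((1 : ℕ) : ℤ) + 1 = (0 : ℕ) by norm_num,
        horadam_neg_natCast, horadam_natCast, horadam_natCast]
      simp only [horadamAux, horadamNegAux]
      field_simp
      ring
    · rw [show -((k + 2 : ℕ) : ℤ) + 2 = -(k : ℕ) by push_cast; ring,
        show -((k + 2 : ℕ) : ℤ) + 1 = -(k + 1 : ℕ) by push_cast; ring,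
        horadam_neg_natCast, horadam_neg_natCast, horadam_neg_natCast, horadamNegAux]
      field_simp
      ring

lemma horadam_eq_of_add_two (hq : q ≠ 0) {g : ℤ → ℂ} (h0 : g 0 = a) (h1 : g 1 = b)
    (hg : ∀ m, g (m + 2) = p * g (m + 1) - q * g m) (m : ℤ) : horadam a b p q m = g m := by
  suffices ∀ m, horadam a b p q m = g m ∧ horadam a b p q (m + 1) = g (m + 1) from (this m).1
  intro m
  induction m using Int.induction_on with
  | zero => exact ⟨horadam_zero.trans h0.symm, by rw [zero_add, horadam_one, h1]⟩
  | succ k ih =>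
    refine ⟨ih.2, ?_⟩
    rw [add_assoc, one_add_one_eq_two, horadam_add_two hq, hg, ih.1, ih.2]
  | pred k ih =>
    refine ⟨?_, by simpa using ih.1⟩
    have hw := horadam_add_two (a := a) (b := b) (p := p) hq (-k - 1)
    have hg' := hg (-k - 1)
    rw [show -(k : ℤ) - 1 + 2 = -k + 1 by ring, show -(k : ℤ) - 1 + 1 = -k by ring] at hw hg'
    rw [ih.1, ih.2] at hw
    exact mul_left_cancel₀ hq (by linear_combination hw - hg')

end Horadam

section Binet

variable {α β : ℂ}

lemma horadam_eq_binet (hα : α ≠ 0) (hβ : β ≠ 0) {a b A B : ℂ} (ha : A + B = a)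
    (hb : A * α + B * β = b) (m : ℤ) :
    horadam a b (α + β) (α * β) m = A * α ^ m + B * β ^ m := by
  refine horadam_eq_of_add_two (g := fun m ↦ A * α ^ m + B * β ^ m) (mul_ne_zero hα hβ)
    (by simp [ha]) (by simp [hb]) (fun m ↦ ?_) m
  simp only [zpow_add₀ hα, zpow_add₀ hβ, zpow_ofNat]
  ring

lemma exists_horadam_eq_binet (hα : α ≠ 0) (hβ : β ≠ 0) (hne : α ≠ β) (a b : ℂ) :
    ∃ A B : ℂ, ∀ m, horadam a b (α + β) (α * β) m = A * α ^ m + B * β ^ m := by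
  have hd : α - β ≠ 0 := sub_ne_zero.mpr hne
  refine ⟨(b - a * β) / (α - β), (a * α - b) / (α - β), horadam_eq_binet hα hβ ?_ ?_⟩ <;>
  · field_simp
    ring

lemma lucasU_eq_binet (hα : α ≠ 0) (hβ : β ≠ 0) (hne : α ≠ β) (m : ℤ) :
    horadam 0 1 (α + β) (α * β) m = (α ^ m - β ^ m) / (α - β) := by
  have hd : α - β ≠ 0 := sub_ne_zero.mpr hne
  rw [horadam_eq_binet hα hβ (A := 1 / (α - β)) (B := -1 / (α - β)) (by ring)
    (by field_simp; ring)]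
  ring

lemma lucasV_eq_binet (hα : α ≠ 0) (hβ : β ≠ 0) (m : ℤ) :
    horadam 2 (α + β) (α + β) (α * β) m = α ^ m + β ^ m := by
  simpa using horadam_eq_binet hα hβ (A := 1) (B := 1) (by norm_num) (by ring) m

lemma binet_add_one_sub_mul_sub_one (hα : α ≠ 0) (hβ : β ≠ 0) {A B : ℂ} {s : ℤ → ℂ}
    (hs : ∀ m, s m = A * α ^ m + B * β ^ m) (t : ℤ) :
    s (t + 1) - α * β * s (t - 1) = (α - β) * (A * α ^ t - B * β ^ t) := by
  simp only [hs, zpow_add_one₀ hα, zpow_add_one₀ hβ, zpow_sub_one₀ hα, zpow_sub_one₀ hβ]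
  field_simp
  ring

lemma exists_roots_of_discrim_ne_zero {p q : ℂ} (hq : q ≠ 0) (hD : p ^ 2 - 4 * q ≠ 0) :
    ∃ α β : ℂ, α + β = p ∧ α * β = q ∧ α ≠ 0 ∧ β ≠ 0 ∧ α ≠ β := by
  obtain ⟨δ, hδ⟩ := IsAlgClosed.exists_pow_nat_eq (p ^ 2 - 4 * q) two_pos
  have hδ0 : δ ≠ 0 := by rintro rfl; apply hD; rw [← hδ]; ring
  have hprod : (p + δ) / 2 * ((p - δ) / 2) = q := by linear_combination (-1 / 4 : ℂ) * hδ
  refine ⟨(p + δ) / 2, (p - δ) / 2, by ring, hprod, ?_, ?_, ?_⟩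
  · rintro h; rw [h, zero_mul] at hprod; exact hq hprod.symm
  · rintro h; rw [h, mul_zero] at hprod; exact hq hprod.symm
  · intro h; exact hδ0 (by linear_combination h)

end Binet

section Sums

variable {R : Type*} [CommSemiring R]

lemma sum_Icc_one_eq_sum_range (f : ℕ → R) (m : ℕ) :
    ∑ j ∈ Icc 1 m, f j = ∑ j ∈ range m, f (j + 1) := by
  rw [← Ico_add_one_right_eq_Icc, sum_Ico_eq_sum_range, add_tsub_cancel_right]
  simp only [add_comm]

lemma sum_range_succ_pow_mul_of_shift {C : R} {g : ℕ → ℕ → R}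
    (hg : ∀ n j, g (n + 1) (j + 1) = g n j) (n m : ℕ) :
    ∑ j ∈ range (m + 1), C ^ j * g (n + 1) j
      = g (n + 1) 0 + C * ∑ j ∈ range m, C ^ j * g n j := by
  rw [sum_range_succ', mul_sum, add_comm]
  simp only [hg, pow_succ, pow_zero, one_mul, mul_assoc, mul_left_comm C]

lemma sum_Icc_pow_mul_of_shift {C : R} {h : ℕ → ℕ → R}
    (hh : ∀ n j, h (n + 1) (j + 1) = h n j) (n : ℕ) :
    ∑ j ∈ Icc 1 (n + 1), C ^ j * h (n + 1) j
      = C * h n 0 + C * ∑ j ∈ Icc 1 n, C ^ j * h n j := by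
  calc _ = C * ∑ j ∈ range (n + 1), C ^ j * h n j := by
        rw [sum_Icc_one_eq_sum_range, mul_sum]
        exact sum_congr rfl fun j _ ↦ by rw [hh, pow_succ]; ring
    _ = _ := by rw [sum_range_succ', sum_Icc_one_eq_sum_range]; ring

/-- When the terms depend only on `n - j`, the left side `S n` satisfies
`S (n + 1) = C * S n + a * g (n + 1) 0 + b * C * h n 0`. -/
lemma sum_pow_mul_add_sum_Icc_pow_mul_eq {C a b : R} {k : ℕ} {g h : ℕ → ℕ → R} {F : ℕ → R}
    (hg : ∀ n j, g (n + 1) (j + 1) = g n j) (hh : ∀ n j, h (n + 1) (j + 1) = h n j)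
    (h0 : a * ∑ j ∈ range k, C ^ j * g 0 j = F 0)
    (hstep : ∀ n, C * F n + a * g (n + 1) 0 + b * C * h n 0 = F (n + 1)) (n : ℕ) :
    a * ∑ j ∈ range (n + k), C ^ j * g n j + b * ∑ j ∈ Icc 1 n, C ^ j * h n j = F n := by
  induction n with
  | zero => simpa using h0
  | succ n ih =>
    rw [Nat.add_right_comm, sum_range_succ_pow_mul_of_shift hg, sum_Icc_pow_mul_of_shift hh,
      ← hstep, ← ih]
    ring

end Sums

lemma geom_sum₂_zpow_mul {K : Type*} [Field K] (x y : K) (M : ℕ) :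
    (∑ j ∈ range M, x ^ ((M : ℤ) - 1 - j) * y ^ j) * (x - y) = x ^ M - y ^ M := by
  have hterm : ∀ j ∈ range M, x ^ ((M : ℤ) - 1 - j) * y ^ j = y ^ j * x ^ (M - 1 - j) := by
    intro j hj
    rw [mul_comm, ← zpow_natCast x]
    congr 2
    have := mem_range.mp hj
    omega
  rw [sum_congr rfl hterm]
  linear_combination -(geom_sum₂_mul y x M)

section Alternating

variable {α β : ℂ}

lemma alternating_sum_zpow_mul (hα : α ≠ 0) (β : ℂ) (r t : ℤ) (M : ℕ) :
    (∑ j ∈ range M, (-1) ^ j * (α * β) ^ (r * j) * α ^ (r * ((M : ℤ) - 1 - 2 * j) + t))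
        * (α ^ r + β ^ r) = α ^ t * ((α ^ r) ^ M - (-β ^ r) ^ M) := by
  have hterm (j : ℕ) : (-1) ^ j * (α * β) ^ (r * j) * α ^ (r * ((M : ℤ) - 1 - 2 * j) + t)
      = α ^ t * ((α ^ r) ^ ((M : ℤ) - 1 - j) * (-β ^ r) ^ j) := by
    calc _ = (-1) ^ j * β ^ (r * j) * (α ^ (r * j) * α ^ (r * ((M : ℤ) - 1 - 2 * j) + t)) := by
          rw [mul_zpow]; ring
      _ = (-1) ^ j * β ^ (r * j) * (α ^ t * α ^ (r * ((M : ℤ) - 1 - j))) := by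
          rw [← zpow_add₀ hα, ← zpow_add₀ hα]; ring_nf
      _ = _ := by rw [neg_pow, zpow_mul, zpow_mul, zpow_natCast]; ring
  rw [sum_congr rfl fun j _ ↦ hterm j, ← mul_sum, mul_assoc,
    show α ^ r + β ^ r = α ^ r - -β ^ r by ring, geom_sum₂_zpow_mul]

lemma alternating_sum_binet_mul (hα : α ≠ 0) (hβ : β ≠ 0) {A B : ℂ} {s : ℤ → ℂ}
    (hs : ∀ m, s m = A * α ^ m + B * β ^ m) (r t : ℤ) (M : ℕ) :
    (∑ j ∈ range M, (-1) ^ j * (α * β) ^ (r * j) * s (r * ((M : ℤ) - 1 - 2 * j) + t))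
        * (α ^ r + β ^ r)
      = A * (α ^ t * ((α ^ r) ^ M - (-β ^ r) ^ M))
        + B * (β ^ t * ((β ^ r) ^ M - (-α ^ r) ^ M)) := by
  rw [← alternating_sum_zpow_mul hα β, ← alternating_sum_zpow_mul hβ α, mul_comm β α,
    add_comm (β ^ r), ← mul_assoc, ← mul_assoc, ← add_mul, mul_sum, mul_sum, ← sum_add_distrib]
  congr 1
  exact sum_congr rfl fun j _ ↦ by rw [hs]; ring

end Alternating

section Identities

variable {p q : ℂ}

lemma horadam_add_sub_zpow_mul_horadam_sub (hq : q ≠ 0) (hD : p ^ 2 - 4 * q ≠ 0) (a b : ℂ)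
    (t k : ℤ) :
    horadam a b p q (t + k) - q ^ k * horadam a b p q (t - k)
      = (horadam a b p q (t + 1) - q * horadam a b p q (t - 1)) * horadam 0 1 p q k := by
  obtain ⟨α, β, rfl, rfl, hα, hβ, hne⟩ := exists_roots_of_discrim_ne_zero hq hD
  obtain ⟨A, B, hw⟩ := exists_horadam_eq_binet hα hβ hne a b
  have hd : α - β ≠ 0 := sub_ne_zero.mpr hne
  rw [binet_add_one_sub_mul_sub_one hα hβ hw, lucasU_eq_binet hα hβ hne, hw, hw, mul_zpow,
    zpow_add₀ hα, zpow_add₀ hβ, zpow_sub₀ hα, zpow_sub₀ hβ]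
  field_simp
  ring

lemma alternating_sum_horadam_two_mul_add_one (hq : q ≠ 0) (hD : p ^ 2 - 4 * q ≠ 0) (a b : ℂ)
    {r : ℤ} (hv : horadam 2 p p q r ≠ 0) (t : ℤ) (n : ℕ) :
    ∑ j ∈ range (2 * n + 1),
        (-1 : ℂ) ^ j * q ^ (r * (j : ℤ)) * horadam a b p q (2 * r * ((n : ℤ) - j) + t)
      = horadam a b p q t * horadam 2 p p q (r * (2 * (n : ℤ) + 1)) / horadam 2 p p q r := by
  obtain ⟨α, β, rfl, rfl, hα, hβ, hne⟩ := exists_roots_of_discrim_ne_zero hq hD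
  obtain ⟨A, B, hw⟩ := exists_horadam_eq_binet hα hβ hne a b
  have key := alternating_sum_binet_mul hα hβ hw r t (2 * n + 1)
  rw [Odd.neg_pow (odd_two_mul_add_one n), Odd.neg_pow (odd_two_mul_add_one n), sub_neg_eq_add,
    sub_neg_eq_add] at key
  simp only [lucasV_eq_binet hα hβ] at hv ⊢
  rw [eq_div_iff hv, hw, zpow_mul, zpow_mul,
    show 2 * (n : ℤ) + 1 = (2 * n + 1 : ℕ) by push_cast; ring, zpow_natCast, zpow_natCast]
  calc _ = (∑ j ∈ range (2 * n + 1), (-1) ^ j * (α * β) ^ (r * j)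
            * horadam a b (α + β) (α * β) (r * (((2 * n + 1 : ℕ) : ℤ) - 1 - 2 * j) + t))
          * (α ^ r + β ^ r) := by
        congr 1
        exact sum_congr rfl fun j _ ↦ by push_cast; ring_nf
    _ = _ := by rw [key]; ring

lemma alternating_sum_horadam_two_mul (hq : q ≠ 0) (hD : p ^ 2 - 4 * q ≠ 0) (a b : ℂ)
    {r : ℤ} (hv : horadam 2 p p q r ≠ 0) (t : ℤ) (n : ℕ) :
    ∑ j ∈ range (2 * n),
        (-1 : ℂ) ^ j * q ^ (r * (j : ℤ)) * horadam a b p q (r * (2 * (n : ℤ) - 1 - 2 * j) + t)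
      = (horadam a b p q (t + 1) - q * horadam a b p q (t - 1)) * horadam 0 1 p q (2 * r * n)
        / horadam 2 p p q r := by
  obtain ⟨α, β, rfl, rfl, hα, hβ, hne⟩ := exists_roots_of_discrim_ne_zero hq hD
  obtain ⟨A, B, hw⟩ := exists_horadam_eq_binet hα hβ hne a b
  have hd : α - β ≠ 0 := sub_ne_zero.mpr hne
  have key := alternating_sum_binet_mul hα hβ hw r t (2 * n)
  rw [Even.neg_pow (even_two_mul n), Even.neg_pow (even_two_mul n)] at key
  rw [lucasV_eq_binet hα hβ] at hv ⊢
  rw [eq_div_iff hv, lucasU_eq_binet hα hβ hne, binet_add_one_sub_mul_sub_one hα hβ hw,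
    show 2 * r * (n : ℤ) = r * (2 * n : ℕ) by push_cast; ring, zpow_mul α, zpow_mul β,
    zpow_natCast, zpow_natCast, mul_div_assoc', mul_div_right_comm, mul_div_cancel_left₀ _ hd]
  calc _ = (∑ j ∈ range (2 * n), (-1) ^ j * (α * β) ^ (r * j)
            * horadam a b (α + β) (α * β) (r * (((2 * n : ℕ) : ℤ) - 1 - 2 * j) + t))
          * (α ^ r + β ^ r) := by
        push_cast
        rfl
    _ = _ := by rw [key]; ring

end Identities

section Expansions

variable {p q : ℂ}

lemma lucasV_add_two_mul_div (hq : q ≠ 0) (hD : p ^ 2 - 4 * q ≠ 0) {r : ℤ}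
    (hu : horadam 0 1 p q r ≠ 0) (hv : horadam 2 p p q r ≠ 0) (m : ℤ) :
    horadam 0 1 p q r ^ 2 * (p ^ 2 - 4 * q) / 4 * horadam 2 p p q m / horadam 2 p p q r
        + horadam 2 p p q (m + r) / 2
        + horadam 0 1 p q r ^ 2 * (p ^ 2 - 4 * q) / 4 * horadam 0 1 p q m / horadam 0 1 p q r
      = horadam 2 p p q (m + 2 * r) / horadam 2 p p q r := by
  obtain ⟨α, β, rfl, rfl, hα, hβ, hne⟩ := exists_roots_of_discrim_ne_zero hq hD
  have hd : α - β ≠ 0 := sub_ne_zero.mpr hne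
  simp only [lucasU_eq_binet hα hβ hne, lucasV_eq_binet hα hβ] at hu hv ⊢
  rw [show (α + β) ^ 2 - 4 * (α * β) = (α - β) ^ 2 by ring, two_mul, ← add_assoc,
    zpow_add₀ hα, zpow_add₀ hβ, zpow_add₀ hα, zpow_add₀ hβ, zpow_add₀ hα, zpow_add₀ hβ]
  field_simp
  ring

lemma lucasU_add_two_mul_div (hq : q ≠ 0) (hD : p ^ 2 - 4 * q ≠ 0) {r : ℤ}
    (hu : horadam 0 1 p q r ≠ 0) (hv : horadam 2 p p q r ≠ 0) (m : ℤ) :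
    horadam 0 1 p q r ^ 2 * (p ^ 2 - 4 * q) / 4 * horadam 0 1 p q m / horadam 2 p p q r
        + horadam 0 1 p q (m + r) / 2
        + horadam 0 1 p q r ^ 2 * (p ^ 2 - 4 * q) / 4 * horadam 2 p p q m
          / (horadam 0 1 p q r * (p ^ 2 - 4 * q))
      = horadam 0 1 p q (m + 2 * r) / horadam 2 p p q r := by
  obtain ⟨α, β, rfl, rfl, hα, hβ, hne⟩ := exists_roots_of_discrim_ne_zero hq hD
  have hd : α - β ≠ 0 := sub_ne_zero.mpr hne
  simp only [lucasU_eq_binet hα hβ hne, lucasV_eq_binet hα hβ] at hu hv ⊢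
  rw [show (α + β) ^ 2 - 4 * (α * β) = (α - β) ^ 2 by ring, two_mul, ← add_assoc,
    zpow_add₀ hα, zpow_add₀ hβ, zpow_add₀ hα, zpow_add₀ hβ, zpow_add₀ hα, zpow_add₀ hβ]
  field_simp
  ring

lemma sum_lucasV_add_sum_lucasU_eq (hq : q ≠ 0) (hD : p ^ 2 - 4 * q ≠ 0) {r : ℤ}
    (hu : horadam 0 1 p q r ≠ 0) (hv : horadam 2 p p q r ≠ 0) (c : ℂ) (n : ℕ) :
    c / 2 * (∑ j ∈ range (n + 1), (horadam 0 1 p q r ^ 2 * (p ^ 2 - 4 * q) / 4) ^ j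
          * horadam 2 p p q (2 * r * ((n : ℤ) - j)))
      + c / horadam 0 1 p q r
        * ∑ j ∈ Icc 1 n, (horadam 0 1 p q r ^ 2 * (p ^ 2 - 4 * q) / 4) ^ j
          * horadam 0 1 p q (r * (2 * (n : ℤ) - 2 * j + 1))
      = c * horadam 2 p p q (r * (2 * (n : ℤ) + 1)) / horadam 2 p p q r := by
  refine sum_pow_mul_add_sum_Icc_pow_mul_eq (k := 1)
    (g := fun n j ↦ horadam 2 p p q (2 * r * ((n : ℤ) - j)))
    (h := fun n j ↦ horadam 0 1 p q (r * (2 * (n : ℤ) - 2 * j + 1)))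
    (F := fun n ↦ c * horadam 2 p p q (r * (2 * (n : ℤ) + 1)) / horadam 2 p p q r)
    (fun n j ↦ by push_cast; ring_nf) (fun n j ↦ by push_cast; ring_nf) ?_ (fun n ↦ ?_) n
  · simp [horadam_zero]
    field_simp
  · rw [show 2 * r * (((n + 1 : ℕ) : ℤ) - ((0 : ℕ) : ℤ)) = r * (2 * n + 1) + r by
        push_cast; ring,
      show r * (2 * (n : ℤ) - 2 * ((0 : ℕ) : ℤ) + 1) = r * (2 * n + 1) by push_cast; ring,
      show r * (2 * ((n + 1 : ℕ) : ℤ) + 1) = r * (2 * n + 1) + 2 * r by push_cast; ring]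
    linear_combination c * lucasV_add_two_mul_div hq hD hu hv (r * (2 * n + 1))

lemma sum_lucasU_add_sum_lucasV_eq (hq : q ≠ 0) (hD : p ^ 2 - 4 * q ≠ 0) {r : ℤ}
    (hu : horadam 0 1 p q r ≠ 0) (hv : horadam 2 p p q r ≠ 0) (c : ℂ) (n : ℕ) :
    c / 2 * (∑ j ∈ range n, (horadam 0 1 p q r ^ 2 * (p ^ 2 - 4 * q) / 4) ^ j
          * horadam 0 1 p q (r * (2 * (n : ℤ) - 2 * j - 1)))
      + c / (horadam 0 1 p q r * (p ^ 2 - 4 * q))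
        * ∑ j ∈ Icc 1 n, (horadam 0 1 p q r ^ 2 * (p ^ 2 - 4 * q) / 4) ^ j
          * horadam 2 p p q (r * (2 * (n : ℤ) - 2 * j))
      = c * horadam 0 1 p q (2 * r * n) / horadam 2 p p q r := by
  refine sum_pow_mul_add_sum_Icc_pow_mul_eq (k := 0)
    (g := fun n j ↦ horadam 0 1 p q (r * (2 * (n : ℤ) - 2 * j - 1)))
    (h := fun n j ↦ horadam 2 p p q (r * (2 * (n : ℤ) - 2 * j)))
    (F := fun n ↦ c * horadam 0 1 p q (2 * r * n) / horadam 2 p p q r)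
    (fun n j ↦ by push_cast; ring_nf) (fun n j ↦ by push_cast; ring_nf) ?_ (fun n ↦ ?_) n
  · simp [horadam_zero]
  · rw [show r * (2 * ((n + 1 : ℕ) : ℤ) - 2 * ((0 : ℕ) : ℤ) - 1) = 2 * r * n + r by
        push_cast; ring,
      show r * (2 * (n : ℤ) - 2 * ((0 : ℕ) : ℤ)) = 2 * r * n by push_cast; ring,
      show 2 * r * ((n + 1 : ℕ) : ℤ) = 2 * r * n + 2 * r by push_cast; ring]
    linear_combination c * lucasU_add_two_mul_div hq hD hu hv (2 * r * n)

end Expansions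

theorem horadam_thm2_general (a b p q : ℂ) (hq : q ≠ 0) (hD : p ^ 2 - 4 * q ≠ 0)
    (r t : ℤ) (hu : horadam 0 1 p q r ≠ 0) (hv : horadam 2 p p q r ≠ 0) (n : ℕ) :
    ((∑ j ∈ Finset.range (2 * n + 1),
        (-1 : ℂ) ^ j * q ^ (r * (j : ℤ)) * horadam a b p q (2 * r * ((n : ℤ) - j) + t)
      = horadam a b p q t / 2
          * (∑ j ∈ Finset.range (n + 1),
              (horadam 0 1 p q r ^ 2 * (p ^ 2 - 4 * q) / 4) ^ j
                * horadam 2 p p q (2 * r * ((n : ℤ) - j)))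
        + horadam a b p q t / horadam 0 1 p q r
          * ∑ j ∈ Finset.Icc 1 n,
              (horadam 0 1 p q r ^ 2 * (p ^ 2 - 4 * q) / 4) ^ j
                * horadam 0 1 p q (r * (2 * (n : ℤ) - 2 * j + 1))) ∧
    (∑ j ∈ Finset.range (2 * n + 1),
        (-1 : ℂ) ^ j * q ^ (r * (j : ℤ)) * horadam a b p q (2 * r * ((n : ℤ) - j) + t)
      = horadam a b p q t * horadam 2 p p q (r * (2 * (n : ℤ) + 1)) / horadam 2 p p q r)) ∧
    ((∑ j ∈ Finset.range (2 * n),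
        (-1 : ℂ) ^ j * q ^ (r * (j : ℤ))
          * horadam a b p q (r * (2 * (n : ℤ) - 1 - 2 * j) + t)
      = (horadam a b p q (t + 1) - q * horadam a b p q (t - 1)) / 2
          * (∑ j ∈ Finset.range n,
              (horadam 0 1 p q r ^ 2 * (p ^ 2 - 4 * q) / 4) ^ j
                * horadam 0 1 p q (r * (2 * (n : ℤ) - 2 * j - 1)))
        + (horadam a b p q (t + 1) - q * horadam a b p q (t - 1))
            / (horadam 0 1 p q r * (p ^ 2 - 4 * q))
          * ∑ j ∈ Finset.Icc 1 n,
              (horadam 0 1 p q r ^ 2 * (p ^ 2 - 4 * q) / 4) ^ j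
                * horadam 2 p p q (r * (2 * (n : ℤ) - 2 * j))) ∧
    (∑ j ∈ Finset.range (2 * n),
        (-1 : ℂ) ^ j * q ^ (r * (j : ℤ))
          * horadam a b p q (r * (2 * (n : ℤ) - 1 - 2 * j) + t)
      = (horadam a b p q (t + 2 * r * n)
          - q ^ (2 * r * (n : ℤ)) * horadam a b p q (t - 2 * r * n))
        / horadam 2 p p q r)) := by
  have hodd := alternating_sum_horadam_two_mul_add_one hq hD a b hv t n
  have heven := alternating_sum_horadam_two_mul hq hD a b hv t n
  rw [horadam_add_sub_zpow_mul_horadam_sub hq hD a b t (2 * r * n)]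
  exact ⟨⟨hodd.trans (sum_lucasV_add_sum_lucasU_eq hq hD hu hv _ n).symm, hodd⟩,
    heven.trans (sum_lucasU_add_sum_lucasV_eq hq hD hu hv _ n).symm, heven⟩

theorem horadam_thm2 (a b p q : ℂ) (hp : p ≠ 0) (hq : q ≠ 0) (hD : p ^ 2 - 4 * q ≠ 0)
    (r t : ℤ) (hu : horadam 0 1 p q r ≠ 0) (hv : horadam 2 p p q r ≠ 0) (n : ℕ) :
    ((∑ j ∈ Finset.range (2 * n + 1),
        (-1 : ℂ) ^ j * q ^ (r * (j : ℤ)) * horadam a b p q (2 * r * ((n : ℤ) - j) + t)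
      = horadam a b p q t / 2
          * (∑ j ∈ Finset.range (n + 1),
              (horadam 0 1 p q r ^ 2 * (p ^ 2 - 4 * q) / 4) ^ j
                * horadam 2 p p q (2 * r * ((n : ℤ) - j)))
        + horadam a b p q t / horadam 0 1 p q r
          * ∑ j ∈ Finset.Icc 1 n,
              (horadam 0 1 p q r ^ 2 * (p ^ 2 - 4 * q) / 4) ^ j
                * horadam 0 1 p q (r * (2 * (n : ℤ) - 2 * j + 1))) ∧
    (∑ j ∈ Finset.range (2 * n + 1),
        (-1 : ℂ) ^ j * q ^ (r * (j : ℤ)) * horadam a b p q (2 * r * ((n : ℤ) - j) + t)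
      = horadam a b p q t * horadam 2 p p q (r * (2 * (n : ℤ) + 1)) / horadam 2 p p q r)) ∧
    ((∑ j ∈ Finset.range (2 * n),
        (-1 : ℂ) ^ j * q ^ (r * (j : ℤ))
          * horadam a b p q (r * (2 * (n : ℤ) - 1 - 2 * j) + t)
      = (horadam a b p q (t + 1) - q * horadam a b p q (t - 1)) / 2
          * (∑ j ∈ Finset.range n,
              (horadam 0 1 p q r ^ 2 * (p ^ 2 - 4 * q) / 4) ^ j
                * horadam 0 1 p q (r * (2 * (n : ℤ) - 2 * j - 1)))
        + (horadam a b p q (t + 1) - q * horadam a b p q (t - 1))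
            / (horadam 0 1 p q r * (p ^ 2 - 4 * q))
          * ∑ j ∈ Finset.Icc 1 n,
              (horadam 0 1 p q r ^ 2 * (p ^ 2 - 4 * q) / 4) ^ j
                * horadam 2 p p q (r * (2 * (n : ℤ) - 2 * j))) ∧
    (∑ j ∈ Finset.range (2 * n),
        (-1 : ℂ) ^ j * q ^ (r * (j : ℤ))
          * horadam a b p q (r * (2 * (n : ℤ) - 1 - 2 * j) + t)
      = (horadam a b p q (t + 2 * r * n)
          - q ^ (2 * r * (n : ℤ)) * horadam a b p q (t - 2 * r * n))
        / horadam 2 p p q r)) :=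
  horadam_thm2_general a b p q hq hD r t hu hv n
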